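/- arXiv:1609.05049 — 2 statements merged into one kernel-verified Lean document; each statement's English description precedes it below -/
import Mathlib

section
/- For x, t, y₀, c, h, ε, d real with c, h > 0, 0 < ε ≤ d, |t| ≤ y₀, and D(√(y₀²−t²)) + ε ≤ |x| ≤ d (where D(z) = z√(c/(c+2z))), for every σ ∈ [0,1] one has (c(−x² + (y₀²−t²)σ²) − 2x²√(y₀²−t²)·σ)/(4h(c²+x²)) ≤ −aε²/h, where a = c/(4(c²+d²)). -/
set_option maxHeartbeats 1000000 in
theorem exponent_estimate (x t y₀ c h ε d : ℝ)
    (hc : 0 < c) (hh : 0 < h) (hε : 0 < ε) (hεd : ε ≤ d) (ht : |t| ≤ y₀)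
    (hD : Real.sqrt (y₀ ^ 2 - t ^ 2) *
        Real.sqrt (c / (c + 2 * Real.sqrt (y₀ ^ 2 - t ^ 2))) + ε ≤ |x|)
    (hxd : |x| ≤ d) :
    ∀ σ ∈ Set.Icc (0 : ℝ) 1,
      (c * (-x ^ 2 + (y₀ ^ 2 - t ^ 2) * σ ^ 2)
          - 2 * x ^ 2 * Real.sqrt (y₀ ^ 2 - t ^ 2) * σ) / (4 * h * (c ^ 2 + x ^ 2))
        ≤ -(c / (4 * (c ^ 2 + d ^ 2)) * ε ^ 2) / h := by
  intro σ hσ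
  obtain ⟨hσ0, hσ1⟩ := hσ
  set z := Real.sqrt (y₀ ^ 2 - t ^ 2) with hzdef
  have hy0 : 0 ≤ y₀ := le_trans (abs_nonneg t) ht
  have hyt : 0 ≤ y₀ ^ 2 - t ^ 2 := by
    nlinarith [sq_abs t, abs_nonneg t]
  have hz0 : 0 ≤ z := Real.sqrt_nonneg _
  have hz2 : z ^ 2 = y₀ ^ 2 - t ^ 2 := Real.sq_sqrt hyt
  have hcz : 0 < c + 2 * z := by linarith
  have hq : Real.sqrt (c / (c + 2 * z)) ^ 2 = c / (c + 2 * z) :=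
    Real.sq_sqrt (by positivity)
  -- ε ≤ |x|
  have hεx : ε ≤ |x| := by
    have : 0 ≤ z * Real.sqrt (c / (c + 2 * z)) := by positivity
    linarith
  have hx2 : ε ^ 2 ≤ x ^ 2 := by
    nlinarith [sq_abs x, abs_nonneg x]
  -- key: c z² ≤ x²(c+2z) − cε²
  have hkey : c * z ^ 2 ≤ x ^ 2 * (c + 2 * z) - c * ε ^ 2 := by
    have h1 : (z * Real.sqrt (c / (c + 2 * z))) ^ 2 ≤ (|x| - ε) ^ 2 := by
      have h0 : 0 ≤ z * Real.sqrt (c / (c + 2 * z)) := by positivity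
      nlinarith [hD]
    have h2 : (z * Real.sqrt (c / (c + 2 * z))) ^ 2 = z ^ 2 * (c / (c + 2 * z)) := by
      rw [mul_pow, hq]
    rw [h2] at h1
    have h3 : z ^ 2 * c ≤ (c + 2 * z) * (|x| - ε) ^ 2 := by
      rw [div_eq_mul_inv] at h1
      have := (div_le_iff₀ hcz).mp (by rw [div_eq_mul_inv]; nlinarith [h1] : z ^ 2 * c / (c + 2*z) ≤ (|x| - ε)^2)
      linarith
    have hax : |x| ^ 2 = x ^ 2 := sq_abs x
    nlinarith [mul_nonneg hc.le (mul_nonneg hε.le (sub_nonneg.mpr hεx)),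
      mul_nonneg hz0 (mul_nonneg hε.le (by linarith : (0:ℝ) ≤ 2 * |x| - ε))]
  -- numerator bound: N ≤ −cε²
  have hN : c * (-x ^ 2 + (y₀ ^ 2 - t ^ 2) * σ ^ 2) - 2 * x ^ 2 * z * σ ≤ -(c * ε ^ 2) := by
    rw [← hz2]
    have hσ2 : σ ^ 2 ≤ σ := by nlinarith
    -- f(σ) ≤ σ * f(1) ≤ max(0, f(1)) ≤ c(x²−ε²)
    have hf1 : c * z ^ 2 - 2 * x ^ 2 * z ≤ c * (x ^ 2 - ε ^ 2) := by nlinarith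
    have hT : 0 ≤ c * (x ^ 2 - ε ^ 2) := by nlinarith
    have step1 : c * z ^ 2 * σ ^ 2 - 2 * x ^ 2 * z * σ ≤ σ * (c * z ^ 2 - 2 * x ^ 2 * z) := by
      nlinarith [mul_nonneg (mul_nonneg hc.le (sq_nonneg z)) (sub_nonneg.mpr hσ2)]
    have step2 : σ * (c * z ^ 2 - 2 * x ^ 2 * z) ≤ c * (x ^ 2 - ε ^ 2) := by
      nlinarith [mul_le_mul_of_nonneg_left hf1 hσ0, mul_nonneg (sub_nonneg.mpr hσ1) hT]
    nlinarith [step1, step2]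
  -- clear denominators
  have hcx : 0 < c ^ 2 + x ^ 2 := by positivity
  have hcd : 0 < c ^ 2 + d ^ 2 := by positivity
  have hxd2 : x ^ 2 ≤ d ^ 2 := by nlinarith [sq_abs x, abs_nonneg x]
  have hR : -(c / (4 * (c ^ 2 + d ^ 2)) * ε ^ 2) / h
      = (-(c * ε ^ 2)) / (4 * h * (c ^ 2 + d ^ 2)) := by
    field_simp
  rw [hR, div_le_div_iff₀ (by positivity) (by positivity)]
  nlinarith [mul_le_mul_of_nonneg_right hN (by positivity : (0:ℝ) ≤ 4 * h * (c ^ 2 + d ^ 2)),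
    mul_nonneg (mul_nonneg hc.le (sq_nonneg ε)) (sub_nonneg.mpr hxd2),
    mul_pos hh (mul_pos hc (pow_pos hε 2))]
end

section
/- Under the hypotheses of the exponent estimate, the kernel K_h(x,y₀,t) = (1/(2π^{3/2}√h)) · Re[(c+ix)^{-1/2} ∫₀^{π/2} exp(−(x + i√(y₀²−t²) sin s)²/(4h(c+ix))) ds] satisfies |K_h(x,y₀,t)| ≤ C h^{−1/2} e^{−aε²/h} with a = c/(4(c²+d²)) and a constant C depending only on c, independent of x, t, h, ε; in particular K_h(x,y₀,t) → 0 as h → 0⁺ on the region D(√(y₀²−t²)) + ε ≤ |x| ≤ d. -/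
/-!
The integrand has modulus `exp (Re w)` with
`Re w = -((c + 2b) x² - c b²) / (4h (c² + x²))`, where `b = √(y₀² - t²) sin s ∈ [0, z]`,
`z = √(y₀² - t²)`. Since `b ↦ c b² / (c + 2b)` is increasing on `[0, ∞)` with value `D(z)²` at
`z`, the condition `|x| ≥ D(z) + ε` gives `(c + 2b) x² - c b² ≥ c ε²`, and `c² + x² ≤ c² + d²`;
so the integrand is at most `exp (-a ε² / h)`. Together with `‖(c + ix)^(-1/2)‖ ≤ c^(-1/2)` this
gives the bound with `C = c^(-1/2) / (4√π)`, and `h^(-1/2) exp (-a ε² / h) → 0` as `h → 0⁺`.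
-/

open Real MeasureTheory

noncomputable def Kh (c h x y₀ t : ℝ) : ℝ :=
  (1 / (2 * Real.pi ^ ((3 : ℝ) / 2) * Real.sqrt h)) *
    ((((c : ℂ) + Complex.I * x) ^ (-(1 / 2 : ℂ)) *
        ∫ s in (0 : ℝ)..(Real.pi / 2),
          Complex.exp (-(((x : ℂ) + Complex.I * Real.sqrt (y₀ ^ 2 - t ^ 2) * Real.sin s) ^ 2)
            / (4 * h * ((c : ℂ) + Complex.I * x)))).re)

open Complex Filter Topology

/-- The paper's `D(z)`. -/
noncomputable def threshold (c z : ℝ) : ℝ := z * √(c / (c + 2 * z))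

section threshold

variable {c z b ε x : ℝ}

lemma threshold_nonneg (hc : 0 < c) (hz : 0 ≤ z) : 0 ≤ threshold c z := by
  unfold threshold; positivity

lemma threshold_sq_mul (hc : 0 < c) (hz : 0 ≤ z) :
    threshold c z ^ 2 * (c + 2 * z) = c * z ^ 2 := by
  rw [threshold, mul_pow, sq_sqrt (by positivity)]
  field_simp

lemma mul_sq_le_threshold_sq (hc : 0 < c) (hb : 0 ≤ b) (hbz : b ≤ z) :
    c * b ^ 2 ≤ (c + 2 * b) * threshold c z ^ 2 := by
  have hcz : 0 < c + 2 * z := by linarith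
  refine le_of_mul_le_mul_right ?_ hcz
  rw [mul_assoc (c + 2 * b), threshold_sq_mul hc (hb.trans hbz)]
  nlinarith [mul_nonneg (mul_nonneg hc.le (sub_nonneg.2 hbz)) (add_nonneg hb (hb.trans hbz)),
    mul_nonneg (mul_nonneg hb (hb.trans hbz)) (sub_nonneg.2 hbz)]

lemma mul_sq_le_of_threshold_add_le_abs (hc : 0 < c) (hε : 0 ≤ ε) (hb : 0 ≤ b) (hbz : b ≤ z)
    (hx : threshold c z + ε ≤ |x|) :
    c * ε ^ 2 ≤ (c + 2 * b) * x ^ 2 - c * b ^ 2 := by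
  have hD := threshold_nonneg hc (hb.trans hbz)
  have hx2 : threshold c z ^ 2 + ε ^ 2 ≤ x ^ 2 := by
    rw [← sq_abs x]; nlinarith [mul_nonneg hD hε]
  nlinarith [mul_sq_le_threshold_sq hc hb hbz,
    mul_le_mul_of_nonneg_left hx2 (by linarith : 0 ≤ c + 2 * b), mul_nonneg hb (sq_nonneg ε)]

end threshold

lemma re_neg_sq_div (c h b x : ℝ) (hc : c ≠ 0) (hh : h ≠ 0) :
    (-((x + I * b) ^ 2) / (4 * h * (c + I * x))).re
      = -((c + 2 * b) * x ^ 2 - c * b ^ 2) / (4 * h * (c ^ 2 + x ^ 2)) := by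
  have : c ^ 2 + x ^ 2 ≠ 0 := by positivity
  simp only [pow_two, div_re, neg_re, mul_re, add_re, ofReal_re, I_re, zero_mul, I_im, ofReal_im,
    mul_zero, sub_self, add_zero, add_im, mul_im, one_mul, zero_add, neg_sub, re_ofNat, im_ofNat,
    sub_zero, normSq_apply, neg_im, neg_add_rev]
  field_simp
  ring

lemma norm_exp_neg_sq_div_le {c h b z ε x d : ℝ} (hc : 0 < c) (hh : 0 < h) (hε : 0 ≤ ε)
    (hb : 0 ≤ b) (hbz : b ≤ z) (hx : threshold c z + ε ≤ |x|) (hxd : |x| ≤ d) :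
    ‖cexp (-((x + I * b) ^ 2) / (4 * h * (c + I * x)))‖
      ≤ rexp (-(c / (4 * (c ^ 2 + d ^ 2)) * ε ^ 2) / h) := by
  rw [norm_exp, re_neg_sq_div c h b x hc.ne' hh.ne', exp_le_exp, neg_div, neg_div, neg_le_neg_iff]
  have hN := mul_sq_le_of_threshold_add_le_abs hc hε hb hbz hx
  have hxd2 : x ^ 2 ≤ d ^ 2 := sq_le_sq' (abs_le.1 hxd).1 (abs_le.1 hxd).2
  calc c / (4 * (c ^ 2 + d ^ 2)) * ε ^ 2 / h = c * ε ^ 2 / (4 * h * (c ^ 2 + d ^ 2)) := by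
        field_simp
    _ ≤ _ := div_le_div₀ ((by positivity : (0 : ℝ) ≤ c * ε ^ 2).trans hN) hN (by positivity)
        (by gcongr)

lemma norm_cpow_ofReal_le_re_rpow {z : ℂ} (hz : 0 < z.re) {r : ℝ} (hr : r ≤ 0) :
    ‖z ^ (r : ℂ)‖ ≤ z.re ^ r := by
  rw [norm_cpow_real]
  exact rpow_le_rpow_of_nonpos hz (re_le_norm z) hr

lemma one_div_mul_pi_div_two (h : ℝ) (hh : 0 ≤ h) :
    1 / (2 * π ^ ((3 : ℝ) / 2) * √h) * (π / 2) = h ^ (-(1 / 2) : ℝ) / (4 * √π) := by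
  have hπ : π ^ ((3 : ℝ) / 2) = π * √π := by
    rw [show (3 : ℝ) / 2 = 1 + 1 / 2 by norm_num, rpow_add pi_pos, rpow_one, sqrt_eq_rpow]
  rw [hπ, rpow_neg hh, ← sqrt_eq_rpow]
  field_simp
  ring

lemma tendsto_rpow_neg_mul_exp_neg_div_nhdsGT_zero (r : ℝ) {A : ℝ} (hA : 0 < A) :
    Tendsto (fun h : ℝ => h ^ (-r) * rexp (-A / h)) (𝓝[>] 0) (𝓝 0) := by
  refine ((tendsto_rpow_mul_exp_neg_mul_atTop_nhds_zero r A hA).comp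
    tendsto_inv_nhdsGT_zero).congr' ?_
  filter_upwards [self_mem_nhdsWithin] with h (hh : 0 < h)
  rw [Function.comp_apply, inv_rpow hh.le, ← rpow_neg hh.le, div_eq_mul_inv]

lemma abs_Kh_le {c h x y₀ t ε d : ℝ} (hc : 0 < c) (hh : 0 < h) (hε : 0 ≤ ε)
    (hx : threshold c √(y₀ ^ 2 - t ^ 2) + ε ≤ |x|) (hxd : |x| ≤ d) :
    |Kh c h x y₀ t| ≤ c ^ (-(1 / 2) : ℝ) / (4 * √π) * h ^ (-(1 / 2) : ℝ) *
      rexp (-(c / (4 * (c ^ 2 + d ^ 2)) * ε ^ 2) / h) := by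
  set M := rexp (-(c / (4 * (c ^ 2 + d ^ 2)) * ε ^ 2) / h)
  set z := √(y₀ ^ 2 - t ^ 2)
  have hcpow : ‖((c : ℂ) + I * x) ^ (-(1 / 2 : ℂ))‖ ≤ c ^ (-(1 / 2) : ℝ) := by
    have := norm_cpow_ofReal_le_re_rpow (z := c + I * x) (by simpa using hc)
      (by norm_num : -(1 / 2 : ℝ) ≤ 0)
    simpa using this
  have hint : ‖∫ s in (0 : ℝ)..(π / 2),
      cexp (-((x + I * z * Real.sin s) ^ 2) / (4 * h * (c + I * x)))‖ ≤ M * (π / 2) := by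
    refine (intervalIntegral.norm_integral_le_of_norm_le_const fun s hs => ?_).trans_eq
      (by rw [sub_zero, abs_of_pos (by positivity)])
    rw [Set.uIoc_of_le (by positivity)] at hs
    have hsin : 0 ≤ Real.sin s :=
      sin_nonneg_of_nonneg_of_le_pi hs.1.le (by linarith [pi_pos, hs.2])
    rw [mul_assoc, ← ofReal_mul]
    exact norm_exp_neg_sq_div_le hc hh hε (mul_nonneg (sqrt_nonneg _) hsin)
      (mul_le_of_le_one_right (sqrt_nonneg _) (sin_le_one s)) hx hxd
  calc |Kh c h x y₀ t|
      ≤ 1 / (2 * π ^ ((3 : ℝ) / 2) * √h) * (c ^ (-(1 / 2) : ℝ) * (M * (π / 2))) := by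
        rw [Kh, abs_mul, abs_of_pos (by positivity)]
        gcongr
        exact (abs_re_le_norm _).trans (norm_mul_le_of_le hcpow hint)
    _ = c ^ (-(1 / 2) : ℝ) * (1 / (2 * π ^ ((3 : ℝ) / 2) * √h) * (π / 2)) * M := by ring
    _ = c ^ (-(1 / 2) : ℝ) / (4 * √π) * h ^ (-(1 / 2) : ℝ) * M := by
        rw [one_div_mul_pi_div_two h hh.le]
        ring

theorem kernel_estimate (c : ℝ) (hc : 0 < c) :
    ∃ C : ℝ, 0 < C ∧
      ∀ y₀ d x t h ε : ℝ, 0 < y₀ → 0 < h → 0 < ε → ε ≤ d → |t| ≤ y₀ →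
        Real.sqrt (y₀ ^ 2 - t ^ 2) *
            Real.sqrt (c / (c + 2 * Real.sqrt (y₀ ^ 2 - t ^ 2))) + ε ≤ |x| →
        |x| ≤ d →
        (|Kh c h x y₀ t| ≤ C * h ^ (-(1 / 2 : ℝ)) *
            Real.exp (-(c / (4 * (c ^ 2 + d ^ 2)) * ε ^ 2) / h)) ∧
        Filter.Tendsto (fun h' : ℝ => Kh c h' x y₀ t)
          (nhdsWithin 0 (Set.Ioi 0)) (nhds 0) := by
  refine ⟨c ^ (-(1 / 2) : ℝ) / (4 * √π), by positivity, ?_⟩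
  intro y₀ d x t h ε _ hh hε _ _ hx hxd
  refine ⟨abs_Kh_le hc hh hε.le hx hxd, ?_⟩
  have hA : 0 < c / (4 * (c ^ 2 + d ^ 2)) * ε ^ 2 := by positivity
  have hlim := (tendsto_rpow_neg_mul_exp_neg_div_nhdsGT_zero (1 / 2) hA).const_mul
    (c ^ (-(1 / 2) : ℝ) / (4 * √π))
  rw [mul_zero] at hlim
  refine squeeze_zero_norm' ?_ hlim
  filter_upwards [self_mem_nhdsWithin] with h' (hh' : 0 < h')
  rw [← mul_assoc]
  exact abs_Kh_le hc hh' hε.le hx hxd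
end
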